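/- arXiv:2207.12278 — 3 statements merged into one kernel-verified Lean document; each statement's English description precedes it below -/
import Mathlib

section
/- Every connected graph G with n vertices and m edges has a cut of size at least m/2 + (n-1)/4 (the Edwards–Erdős bound). -/
open Classical in
/-- The size of the cut determined by `U`: the number of edges of `G` with exactly one
endpoint in `U`. -/
noncomputable def cutSize {V : Type*} [Fintype V] (G : SimpleGraph V) (U : Finset V) : ℕ :=
  (G.edgeFinset.filter (fun e => ∃ u v, e = s(u, v) ∧ u ∈ U ∧ v ∉ U)).card

/-!
The argument of Erdős, Gyárfás and Kohayakawa, by induction on vertex sets `S` inducing a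
connected subgraph. Such an `S` with at least two vertices contains either a vertex `v` of odd
degree `d` in `G[S]` whose removal leaves `G[S]` connected, or an edge `uw` whose two ends can be
removed together leaving it connected. Extending a good cut of the smaller set, `v` is put on the
side opposite to the majority of its neighbours, which gains `(d + 1) / 2` cut edges; `u` and `w`
are put on opposite sides, in the better of the two orientations, which gains
`1 + (d(u) + d(w)) / 2`. Either gain pays for the increase of `e / 2 + (n - 1) / 4`.

The structural fact is proved by the same kind of induction: remove a vertex `v` that does not
disconnect `G[S]`; if its degree is even (hence at least `2`), the odd vertex or the edge found
in `S \ {v}` can be repaired into one for `S`.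
-/

open Finset

namespace Finset

variable {α : Type*} [DecidableEq α]

lemma card_filter_add_card_filter_sdiff {s t : Finset α} (h : s ⊆ t) (p : α → Prop)
    [DecidablePred p] : #{x ∈ s | p x} + #{x ∈ t \ s | p x} = #{x ∈ t | p x} := by
  rw [← card_union_of_disjoint (disjoint_filter_filter disjoint_sdiff), ← filter_union,
    union_sdiff_of_subset h]

lemma mem_and_mem_of_subset_pair {t : Finset α} {a b : α} (h : t ⊆ {a, b}) (heven : Even #t)
    (hne : t.Nonempty) : a ∈ t ∧ b ∈ t := by
  have hcard : #t = 2 := by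
    have := (card_le_card h).trans card_le_two
    have := hne.card_pos
    obtain ⟨k, hk⟩ := heven
    omega
  have heq : t = {a, b} := eq_of_subset_of_card_le h (hcard ▸ card_le_two)
  simp [heq]

end Finset

namespace SimpleGraph

variable {V : Type*} {G : SimpleGraph V}

section Connectivity

lemma preconnected_induce_insert {s : Set V} {v w : V} (hs : (G.induce s).Preconnected)
    (hw : w ∈ s) (hvw : G.Adj v w) : (G.induce (insert v s)).Preconnected := by
  rw [← Set.singleton_union]
  exact (connected_induce_union (s := {v}) Preconnected.of_subsingleton hs rfl hw hvw).preconnected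

lemma exists_adj_of_preconnected_induce {s t : Set V} (hs : (G.induce s).Preconnected)
    {a b : V} (ha : a ∈ s) (hat : a ∈ t) (hb : b ∈ s) (hbt : b ∉ t) :
    ∃ x ∈ s, x ∈ t ∧ ∃ y ∈ s, y ∉ t ∧ G.Adj x y := by
  obtain ⟨p⟩ := hs ⟨a, ha⟩ ⟨b, hb⟩
  obtain ⟨d, -, hd, hd'⟩ := p.exists_boundary_dart {x : s | (x : V) ∈ t} hat hbt
  exact ⟨d.fst, d.fst.2, hd, d.snd, d.snd.2, hd', d.adj⟩

variable [DecidableEq V]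

lemma exists_preconnected_induce_erase {S : Finset V}
    (hS : (G.induce (S : Set V)).Preconnected) (hne : S.Nonempty) :
    ∃ v ∈ S, (G.induce (S.erase v : Set V)).Preconnected := by
  have : Nonempty S := hne.coe_sort
  obtain ⟨v, hv⟩ := (Connected.mk hS).exists_preconnected_induce_compl_singleton_of_finite
  let f : (G.induce (S : Set V)).induce {v}ᶜ →g G.induce (S.erase v : Set V) :=
    { toFun x := ⟨x.1, mem_erase.2 ⟨fun h => x.2 (Subtype.ext h), x.1.2⟩⟩
      map_rel' := id }
  refine ⟨v, v.2, hv.map f fun y => ?_⟩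
  exact ⟨⟨⟨y, mem_of_mem_erase y.2⟩, fun h => ne_of_mem_erase y.2 (congrArg Subtype.val h)⟩,
    rfl⟩

variable (G) in
def HasRemovableEdge (S : Finset V) : Prop :=
  ∃ u ∈ S, ∃ w ∈ S, G.Adj u w ∧ (G.induce ((S.erase u).erase w : Set V)).Preconnected

lemma HasRemovableEdge.of_adj_of_adj {S : Finset V} {u v w : V}
    (hS : (G.induce (S : Set V)).Preconnected) (hv : v ∈ S) (hu : u ∈ S.erase v)
    (hw : w ∈ S.erase v) (huw : u ≠ w) (hvu : G.Adj v u) (hvw : G.Adj v w)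
    (hT : (G.induce (((S.erase v).erase u).erase w : Set V)).Preconnected)
    (hvT : ∀ x ∈ ((S.erase v).erase u).erase w, ¬G.Adj v x) : HasRemovableEdge G S := by
  set T := ((S.erase v).erase u).erase w
  have huS : u ∈ S := mem_of_mem_erase hu
  have hwS : w ∈ S := mem_of_mem_erase hw
  have hSvu : (S.erase v).erase u = insert w T := by
    ext; simp only [mem_erase, ne_eq, mem_insert, T]; grind
  have hSvw : (S.erase v).erase w = insert u T := by
    ext; simp only [mem_erase, ne_eq, mem_insert, T]; grind
  rcases T.eq_empty_or_nonempty with hT0 | ⟨t, ht⟩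
  · refine ⟨v, hv, u, huS, hvu, ?_⟩
    rw [hSvu, hT0, insert_empty, coe_singleton]
    exact Preconnected.of_subsingleton
  -- an edge leaves `{u, v, w}` towards `T`, and it cannot start at `v`
  have htS : t ∈ S ∧ t ∉ ({u, v, w} : Set V) := by
    simp only [mem_erase, ne_eq, T] at ht
    simp [ht]
  obtain ⟨x, -, hx, y, hyS, hy, hxy⟩ :=
    exists_adj_of_preconnected_induce hS (t := {u, v, w}) hv (by simp) htS.1 htS.2
  have hyT : y ∈ T := by
    simp only [Set.mem_insert_iff, Set.mem_singleton_iff, not_or] at hy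
    simpa [T, hy] using hyS
  simp only [Set.mem_insert_iff, Set.mem_singleton_iff] at hx
  rcases hx with rfl | rfl | rfl
  · refine ⟨v, hv, w, hwS, hvw, ?_⟩
    rw [hSvw, coe_insert]
    exact preconnected_induce_insert hT hyT hxy
  · exact absurd hxy (hvT y hyT)
  · refine ⟨v, hv, u, huS, hvu, ?_⟩
    rw [hSvu, coe_insert]
    exact preconnected_induce_insert hT hyT hxy

variable [DecidableRel G.Adj]

lemma filter_adj_erase_nonempty {S : Finset V} (hS : (G.induce (S : Set V)).Preconnected)
    {v b : V} (hv : v ∈ S) (hb : b ∈ S) (hbv : b ≠ v) :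
    {w ∈ S.erase v | G.Adj v w}.Nonempty := by
  obtain ⟨x, -, rfl, y, hyS, hy, hxy⟩ :=
    exists_adj_of_preconnected_induce hS hv (Set.mem_singleton v) hb hbv
  exact ⟨y, mem_filter.2 ⟨mem_erase.2 ⟨hy, hyS⟩, hxy⟩⟩

variable (G) in
def HasRemovableOddVertex (S : Finset V) : Prop :=
  ∃ v ∈ S, Odd #{w ∈ S.erase v | G.Adj v w} ∧ (G.induce (S.erase v : Set V)).Preconnected

lemma HasRemovableOddVertex.of_erase {S : Finset V} {v : V}
    (h : HasRemovableOddVertex G (S.erase v)) (hv : v ∈ S)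
    (hnbr : {w ∈ S.erase v | G.Adj v w}.Nonempty) :
    HasRemovableOddVertex G S ∨ HasRemovableEdge G S := by
  obtain ⟨u, hu, hodd, hT⟩ := h
  have huS := mem_of_mem_erase hu
  by_cases huv : G.Adj u v
  · exact .inr ⟨u, huS, v, hv, huv, by rwa [erase_right_comm]⟩
  refine .inl ⟨u, huS, ?_, ?_⟩
  · rwa [erase_right_comm, filter_erase, erase_eq_of_notMem (by simp [huv])] at hodd
  · obtain ⟨x, hx⟩ := hnbr
    rw [mem_filter] at hx
    have hxu : x ≠ u := by rintro rfl; exact huv hx.2.symm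
    rw [← insert_erase (mem_erase.2 ⟨(ne_of_mem_erase hu).symm, hv⟩), erase_right_comm,
      coe_insert]
    exact preconnected_induce_insert hT (mem_erase.2 ⟨hxu, hx.1⟩) hx.2

lemma HasRemovableEdge.of_erase {S : Finset V} {v : V} (h : HasRemovableEdge G (S.erase v))
    (hS : (G.induce (S : Set V)).Preconnected) (hv : v ∈ S)
    (heven : Even #{w ∈ S.erase v | G.Adj v w}) : HasRemovableEdge G S := by
  obtain ⟨u, hu, w, hw, huw, hT⟩ := h
  set T := ((S.erase v).erase u).erase w
  by_cases hvT : ∃ x ∈ T, G.Adj v x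
  · obtain ⟨x, hx, hvx⟩ := hvT
    have hSuw : (S.erase u).erase w = insert v T := by
      have := ne_of_mem_erase hu
      have := ne_of_mem_erase hw
      ext; simp only [mem_erase, ne_eq, mem_insert, T]; grind
    refine ⟨u, mem_of_mem_erase hu, w, mem_of_mem_erase hw, huw, ?_⟩
    rw [hSuw, coe_insert]
    exact preconnected_induce_insert hT hx hvx
  push Not at hvT
  -- `v` has no neighbour in `T`, so by parity it is adjacent to both `u` and `w`
  have hsub : {x ∈ S.erase v | G.Adj v x} ⊆ {u, w} := by
    intro x hx
    rw [mem_filter] at hx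
    by_contra hxuw
    simp only [mem_insert, mem_singleton, not_or] at hxuw
    exact hvT x (by simp [T, hxuw.1, hxuw.2, hx.1]) hx.2
  obtain ⟨hvu, hvw⟩ := mem_and_mem_of_subset_pair hsub heven
    (filter_adj_erase_nonempty hS hv (mem_of_mem_erase hu) (ne_of_mem_erase hu))
  exact .of_adj_of_adj hS hv hu hw huw.ne (mem_filter.1 hvu).2 (mem_filter.1 hvw).2 hT hvT

theorem hasRemovableOddVertex_or_hasRemovableEdge {S : Finset V}
    (hS : (G.induce (S : Set V)).Preconnected) (hcard : 2 ≤ #S) :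
    HasRemovableOddVertex G S ∨ HasRemovableEdge G S := by
  induction S using Finset.strongInduction with | H S ih =>
  obtain ⟨v, hv, hSv⟩ := exists_preconnected_induce_erase hS (card_pos.1 (by omega))
  by_cases hodd : Odd #{w ∈ S.erase v | G.Adj v w}
  · exact .inl ⟨v, hv, hodd, hSv⟩
  have heven : Even #{w ∈ S.erase v | G.Adj v w} := Nat.not_odd_iff_even.1 hodd
  obtain ⟨b, hb, hbv⟩ : ∃ b ∈ S, b ≠ v := exists_mem_ne hcard v
  have hnbr := filter_adj_erase_nonempty hS hv hb hbv
  have hdeg : 2 ≤ #{w ∈ S.erase v | G.Adj v w} := by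
    have := hnbr.card_pos
    obtain ⟨k, hk⟩ := heven
    omega
  have hcard' : 2 ≤ #(S.erase v) := hdeg.trans (card_filter_le _ _)
  rcases ih _ (erase_ssubset hv) hSv hcard' with h | h
  · exact h.of_erase hv hnbr
  · exact .inr (h.of_erase hS hv heven)

end Connectivity

section Counting

variable [DecidableRel G.Adj]

lemma card_interedges_singleton_left (a : V) (t : Finset V) :
    #(G.interedges {a} t) = #{b ∈ t | G.Adj a b} := by
  refine card_nbij' Prod.snd (a, ·) ?_ ?_ ?_ ?_ <;> intro x <;>
    simp +contextual [mem_interedges_iff, Prod.ext_iff]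

lemma card_interedges_comm (s t : Finset V) : #(G.interedges s t) = #(G.interedges t s) :=
  have := G.symm
  Rel.card_interedges_comm s t

lemma card_interedges_univ_univ [Fintype V] :
    #(G.interedges univ univ) = 2 * #G.edgeFinset := by
  rw [two_mul_card_edgeFinset]
  rfl

variable [DecidableEq V]

lemma card_filter_adj_insert {a b : V} {s : Finset V} (hb : b ∉ s) (hab : G.Adj a b) :
    #{x ∈ insert b s | G.Adj a x} = #{x ∈ s | G.Adj a x} + 1 := by
  rw [filter_insert, if_pos hab, card_insert_of_notMem (fun h => hb (mem_filter.1 h).1)]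

lemma card_interedges_insert_left {a : V} {s : Finset V} (ha : a ∉ s) (t : Finset V) :
    #(G.interedges (insert a s) t) = #{b ∈ t | G.Adj a b} + #(G.interedges s t) := by
  rw [← card_interedges_singleton_left, ← card_union_of_disjoint
    (interedges_disjoint_left G (disjoint_singleton_left.2 ha) t)]
  congr 1
  ext
  simp [mem_interedges_iff, or_and_right]

lemma card_interedges_insert_right {b : V} {t : Finset V} (hb : b ∉ t) (s : Finset V) :
    #(G.interedges s (insert b t)) = #{a ∈ s | G.Adj b a} + #(G.interedges s t) := by
  rw [card_interedges_comm, card_interedges_insert_left hb, card_interedges_comm]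

lemma card_interedges_insert_self {a : V} {s : Finset V} (ha : a ∉ s) :
    #(G.interedges (insert a s) (insert a s)) =
      #(G.interedges s s) + 2 * #{b ∈ s | G.Adj a b} := by
  rw [card_interedges_insert_left ha, card_interedges_insert_right ha, filter_insert,
    if_neg (G.irrefl (v := a))]
  ring

lemma card_interedges_insert_sdiff {v : V} {U T : Finset V} (hv : v ∉ T) (hU : U ⊆ T) :
    #(G.interedges U (insert v T \ U)) = #(G.interedges U (T \ U)) + #{a ∈ U | G.Adj v a} := by
  rw [insert_sdiff_of_notMem _ fun h => hv (hU h),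
    card_interedges_insert_right (fun h => hv (mem_sdiff.1 h).1), add_comm]

lemma card_interedges_insert_insert_sdiff {v : V} {U T : Finset V} (hv : v ∉ T) (hU : U ⊆ T) :
    #(G.interedges (insert v U) (insert v T \ insert v U)) =
      #(G.interedges U (T \ U)) + #{b ∈ T \ U | G.Adj v b} := by
  rw [insert_sdiff_insert, sdiff_insert_of_notMem hv,
    card_interedges_insert_left fun h => hv (hU h), add_comm]

end Counting

section EdwardsCut

variable [DecidableEq V] [DecidableRel G.Adj]

variable (G) in
/-- `G.interedges S S` counts every edge of `G[S]` twice, so this is the Edwards–Erdős bound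
`e(S) / 2 + (#S - 1) / 4 ≤ e(U, S \ U)` cleared of denominators. -/
def HasEdwardsCut (S : Finset V) : Prop :=
  ∃ U ⊆ S, #(G.interedges S S) + #S ≤ 4 * #(G.interedges U (S \ U)) + 1

lemma hasEdwardsCut_of_card_le_one {S : Finset V} (hS : #S ≤ 1) : HasEdwardsCut G S := by
  refine ⟨∅, empty_subset S, ?_⟩
  have : G.interedges S S = ∅ := by
    ext ⟨a, b⟩
    simp only [mem_interedges_iff, notMem_empty, iff_false, not_and]
    intro ha hb
    rw [card_le_one.1 hS a ha b hb]
    exact G.irrefl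
  rw [this, interedges_empty_left]
  simp only [card_empty]
  omega

lemma HasEdwardsCut.insert_of_odd {T : Finset V} {v : V} (h : HasEdwardsCut G T) (hv : v ∉ T)
    (hodd : Odd #{w ∈ T | G.Adj v w}) : HasEdwardsCut G (insert v T) := by
  obtain ⟨U, hU, hcut⟩ := h
  have hcard := card_insert_of_notMem hv
  have hedges := card_interedges_insert_self (G := G) hv
  have hsplit := card_filter_add_card_filter_sdiff hU (G.Adj v)
  have hout := card_interedges_insert_sdiff (G := G) hv hU
  have hin := card_interedges_insert_insert_sdiff (G := G) hv hU
  obtain ⟨k, hk⟩ := hodd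
  rcases le_total #{w ∈ U | G.Adj v w} #{w ∈ T \ U | G.Adj v w} with hle | hle
  · exact ⟨insert v U, insert_subset_insert v hU, by omega⟩
  · exact ⟨U, hU.trans (subset_insert v T), by omega⟩

lemma HasEdwardsCut.insert_insert_of_adj {T : Finset V} {u w : V} (h : HasEdwardsCut G T)
    (hu : u ∉ T) (hw : w ∉ T) (huw : G.Adj u w) : HasEdwardsCut G (insert u (insert w T)) := by
  obtain ⟨U, hU, hcut⟩ := h
  have hu' : u ∉ insert w T := by simp [hu, huw.ne]
  have hwU : w ∉ U := fun h => hw (hU h)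
  have hcard₁ := card_insert_of_notMem hu'
  have hcard₂ := card_insert_of_notMem hw
  have hedges₁ := card_interedges_insert_self (G := G) hu'
  have hedges₂ := card_interedges_insert_self (G := G) hw
  have hdeg := card_filter_adj_insert hw huw
  have hsplit_u := card_filter_add_card_filter_sdiff hU (G.Adj u)
  have hsplit_w := card_filter_add_card_filter_sdiff hU (G.Adj w)
  have hcut₁ := card_interedges_insert_insert_sdiff (G := G) hu' (hU.trans (subset_insert w T))
  have hcut₁' := card_interedges_insert_sdiff (G := G) hw hU
  have hdeg₁ : #{x ∈ insert w T \ U | G.Adj u x} = #{x ∈ T \ U | G.Adj u x} + 1 := by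
    rw [insert_sdiff_of_notMem _ hwU]
    exact card_filter_adj_insert (fun h => hw (mem_sdiff.1 h).1) huw
  have hcut₂ := card_interedges_insert_sdiff (G := G) hu' (insert_subset_insert w hU)
  have hcut₂' := card_interedges_insert_insert_sdiff (G := G) hw hU
  have hdeg₂ := card_filter_adj_insert hwU huw
  rcases le_total (#{x ∈ U | G.Adj w x} + #{x ∈ T \ U | G.Adj u x})
    (#{x ∈ U | G.Adj u x} + #{x ∈ T \ U | G.Adj w x}) with hle | hle
  · exact ⟨insert w U, (insert_subset_insert w hU).trans (subset_insert u _), by omega⟩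
  · exact ⟨insert u U, insert_subset_insert u (hU.trans (subset_insert w T)), by omega⟩

theorem hasEdwardsCut_of_preconnected {S : Finset V}
    (hS : (G.induce (S : Set V)).Preconnected) : HasEdwardsCut G S := by
  induction S using Finset.strongInduction with | H S ih =>
  rcases le_or_gt #S 1 with hS1 | hS2
  · exact hasEdwardsCut_of_card_le_one hS1
  rcases hasRemovableOddVertex_or_hasRemovableEdge hS hS2 with
    ⟨v, hv, hodd, hT⟩ | ⟨u, hu, w, hw, huw, hT⟩
  · rw [← insert_erase hv]
    exact (ih _ (erase_ssubset hv) hT).insert_of_odd (notMem_erase v S) hodd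
  · have hw' : w ∈ S.erase u := mem_erase.2 ⟨huw.ne', hw⟩
    rw [← insert_erase hu, ← insert_erase hw']
    exact (ih _ ((erase_ssubset hw').trans (erase_ssubset hu)) hT).insert_insert_of_adj
      (fun h => notMem_erase u S (mem_of_mem_erase h)) (notMem_erase w _) huw

end EdwardsCut

end SimpleGraph

open SimpleGraph

lemma cutSize_eq_card_interedges {V : Type*} [Fintype V] [DecidableEq V] (G : SimpleGraph V)
    [DecidableRel G.Adj] (U : Finset V) : cutSize G U = #(G.interedges U (univ \ U)) := by
  symm
  refine card_nbij (fun p => s(p.1, p.2)) ?_ ?_ ?_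
  · rintro ⟨a, b⟩ h
    simp only [mem_coe, mem_interedges_iff, mem_sdiff, mem_univ, true_and] at h
    simp only [mem_coe, mem_filter, mem_edgeFinset, mem_edgeSet]
    exact ⟨h.2.2, a, b, rfl, h.1, h.2.1⟩
  · rintro ⟨a, b⟩ h ⟨a', b'⟩ h' heq
    simp only [mem_coe, mem_interedges_iff, mem_sdiff, mem_univ, true_and] at h h'
    rcases Sym2.eq_iff.1 heq with ⟨rfl, rfl⟩ | ⟨rfl, rfl⟩
    · rfl
    · exact absurd h.1 h'.2.1
  · intro e he
    simp only [mem_coe, mem_filter, mem_edgeFinset] at he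
    obtain ⟨he, a, b, rfl, ha, hb⟩ := he
    exact ⟨(a, b), by simpa [mem_interedges_iff, ha, hb] using he, rfl⟩

open Classical in
/-- Edwards–Erdős bound: every connected graph with `n` vertices and `m` edges has a cut of
size at least `m/2 + (n-1)/4`. -/
theorem exists_cut_ge_edwards_erdos {V : Type*} [Fintype V] (G : SimpleGraph V)
    (hG : G.Connected) :
    ∃ U : Finset V, (G.edgeFinset.card : ℚ) / 2 + ((Fintype.card V : ℚ) - 1) / 4
      ≤ (cutSize G U : ℚ) := by
  obtain ⟨U, -, hU⟩ := hasEdwardsCut_of_preconnected (G := G) (S := univ)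
    (by rw [coe_univ]; exact (induceUnivIso G).preconnected_iff.2 hG.preconnected)
  rw [card_interedges_univ_univ, card_univ, ← cutSize_eq_card_interedges] at hU
  refine ⟨U, ?_⟩
  have : (2 * #G.edgeFinset + Fintype.card V : ℚ) ≤ 4 * cutSize G U + 1 := by exact_mod_cast hU
  linarith
end

section
/- If G is a connected graph with n vertices and m edges and G has no bridge, then the minimum arrangement cost of G is at least m + (n−1)/2. -/
open Classical in
/-- The cost of an ordering `α` of the vertices of `G`: the sum over all edges `{u,v}` of
the length `|α(u) − α(v)|`. -/
noncomputable def arrangementCost {V : Type*} [Fintype V] (G : SimpleGraph V)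
    (α : V ≃ Fin (Fintype.card V)) : ℕ :=
  ∑ e ∈ G.edgeFinset,
    Sym2.lift ⟨fun u v => ((α u : ℤ) - (α v : ℤ)).natAbs,
      fun u v => by simp only []; omega⟩ e

/-!
Cut the line between positions `k` and `k + 1` for each `k < n - 1`. The cost of an ordering is
the total number of (edge, cut) crossings. Since `G` is connected and bridgeless, every cut is
crossed by two distinct edges, and only one edge can join the positions `k` and `k + 1`; hence
every cut is crossed by an edge of length at least `2`. The edges of length at least `2` therefore
have total length at least `n - 1`, and since `2ℓ ≥ 2 + ℓ` for `ℓ ≥ 2`,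
`2 · cost ≥ 2m + (n - 1)`.
-/

open Finset Function

/-- The cuts crossed by the edge `e` under the placement `f`, where cut `k` separates the
positions `≤ k` from the positions `> k`. -/
def crossedCuts {V : Type*} (f : V → ℕ) : Sym2 V → Finset ℕ :=
  Sym2.lift ⟨fun u v => Ico (min (f u) (f v)) (max (f u) (f v)), fun u v => by
    simp only [min_comm, max_comm]⟩

section crossedCuts

variable {V : Type*} (f : V → ℕ)

@[simp]
theorem crossedCuts_mk (u v : V) :
    crossedCuts f s(u, v) = Ico (min (f u) (f v)) (max (f u) (f v)) :=
  rfl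

theorem crossedCuts_mk_of_le {u v : V} (h : f u ≤ f v) :
    crossedCuts f s(u, v) = Ico (f u) (f v) := by
  rw [crossedCuts_mk, min_eq_left h, max_eq_right h]

variable {f}

theorem crossedCuts_nonempty (hf : Injective f) {e : Sym2 V} (he : ¬ e.IsDiag) :
    (crossedCuts f e).Nonempty := by
  induction e with
  | h u v =>
    have : f u ≠ f v := hf.ne (by simpa using he)
    simp only [crossedCuts_mk, nonempty_Ico]
    omega

end crossedCuts

open Classical in
theorem arrangementCost_eq_sum_card_crossedCuts {V : Type*} [Fintype V] (G : SimpleGraph V)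
    (α : V ≃ Fin (Fintype.card V)) :
    arrangementCost G α = ∑ e ∈ G.edgeFinset, #(crossedCuts (fun v => (α v : ℕ)) e) := by
  refine sum_congr rfl fun e _ => ?_
  induction e with
  | h u v =>
    simp only [Sym2.lift_mk, crossedCuts_mk, Nat.card_Ico]
    omega

theorem two_mul_card_add_sum_filter_le {ι : Type*} (s : Finset ι) (g : ι → ℕ)
    (hg : ∀ i ∈ s, 1 ≤ g i) :
    2 * #s + ∑ i ∈ s with 2 ≤ g i, g i ≤ 2 * ∑ i ∈ s, g i := by
  rw [sum_filter, card_eq_sum_ones, mul_sum, mul_sum, ← sum_add_distrib]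
  refine sum_le_sum fun i hi => ?_
  have := hg i hi
  split_ifs <;> omega

namespace SimpleGraph

variable {V : Type*} {G : SimpleGraph V}

theorem Connected.exists_boundary_darts_edge_ne (hG : G.Connected)
    (hbridge : ∀ e : Sym2 V, ¬ G.IsBridge e) (S : Set V) {a b : V} (ha : a ∈ S) (hb : b ∉ S) :
    ∃ d₁ d₂ : G.Dart, d₁.edge ≠ d₂.edge ∧
      d₁.fst ∈ S ∧ d₁.snd ∉ S ∧ d₂.fst ∈ S ∧ d₂.snd ∉ S := by
  obtain ⟨p⟩ := hG.preconnected a b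
  obtain ⟨d₁, -, hd₁⟩ := p.exists_boundary_dart S ha hb
  have hH : (G.deleteEdges {d₁.edge}).Connected :=
    hG.connected_delete_edge_of_not_isBridge (hbridge _)
  obtain ⟨q⟩ := hH.preconnected a b
  obtain ⟨d, -, hd⟩ := q.exists_boundary_dart S ha hb
  obtain ⟨hadj, hne⟩ := deleteEdges_adj.mp d.adj
  exact ⟨d₁, ⟨d.toProd, hadj⟩, fun h => hne (Set.mem_singleton_iff.mpr h.symm), hd₁.1, hd₁.2, hd⟩

theorem Connected.exists_dart_two_le_length_across_cut (hG : G.Connected)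
    (hbridge : ∀ e : Sym2 V, ¬ G.IsBridge e) {f : V → ℕ} (hf : Injective f) {a b : V} {k : ℕ}
    (ha : f a ≤ k) (hb : k < f b) :
    ∃ d : G.Dart, f d.fst ≤ k ∧ k < f d.snd ∧ f d.fst + 2 ≤ f d.snd := by
  obtain ⟨d₁, d₂, hne, h₁, h₁', h₂, h₂'⟩ :=
    hG.exists_boundary_darts_edge_ne hbridge {v | f v ≤ k} ha (by simpa using hb)
  simp only [Set.mem_ofPred_eq, not_le] at h₁ h₁' h₂ h₂'
  by_contra! hshort
  have hd₁ := hshort d₁ h₁ h₁'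
  have hd₂ := hshort d₂ h₂ h₂'
  have hfst : d₁.fst = d₂.fst := hf (by omega)
  have hsnd : d₁.snd = d₂.snd := hf (by omega)
  exact hne (by rw [Dart.edge, Dart.edge, hfst, hsnd])

open Classical in
theorem Connected.range_subset_biUnion_crossedCuts [Fintype V] (hG : G.Connected)
    (hbridge : ∀ e : Sym2 V, ¬ G.IsBridge e) (α : V ≃ Fin (Fintype.card V)) :
    range (Fintype.card V - 1) ⊆
      {e ∈ G.edgeFinset | 2 ≤ #(crossedCuts (fun v => (α v : ℕ)) e)}.biUnion
        (crossedCuts fun v => (α v : ℕ)) := by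
  intro k hk
  have hk : k + 1 < Fintype.card V := by rw [mem_range] at hk; omega
  obtain ⟨d, hfst, hsnd, hlen⟩ := hG.exists_dart_two_le_length_across_cut hbridge
    (f := fun v => (α v : ℕ)) (Fin.val_injective.comp α.injective) (k := k)
    (a := α.symm ⟨k, by omega⟩) (b := α.symm ⟨k + 1, hk⟩) (by simp) (by simp)
  have hd : crossedCuts (fun v => (α v : ℕ)) d.edge = Ico (α d.fst).val (α d.snd).val :=
    crossedCuts_mk_of_le (fun v => (α v : ℕ)) (by omega)
  refine mem_biUnion.mpr ⟨d.edge, mem_filter.mpr ⟨G.mem_edgeFinset.mpr d.edge_mem, ?_⟩, ?_⟩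
  · rw [hd, Nat.card_Ico]; omega
  · rw [hd, mem_Ico]; omega

end SimpleGraph

open Classical in
/-- If `G` is a connected bridgeless graph with `n` vertices and `m` edges, then its minimum
arrangement cost is at least `m + (n-1)/2`; i.e. every ordering has cost at least that much. -/
theorem arrangementCost_ge_of_bridgeless {V : Type*} [Fintype V] (G : SimpleGraph V)
    (hconn : G.Connected) (hbridge : ∀ e : Sym2 V, ¬ G.IsBridge e)
    (α : V ≃ Fin (Fintype.card V)) :
    (G.edgeFinset.card : ℚ) + ((Fintype.card V : ℚ) - 1) / 2 ≤ (arrangementCost G α : ℚ) := by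
  have hf : Injective fun v => (α v : ℕ) := Fin.val_injective.comp α.injective
  have hlong : Fintype.card V - 1 ≤
      ∑ e ∈ G.edgeFinset with 2 ≤ #(crossedCuts (fun v => (α v : ℕ)) e),
        #(crossedCuts (fun v => (α v : ℕ)) e) := by
    simpa using (card_le_card (hconn.range_subset_biUnion_crossedCuts hbridge α)).trans
      card_biUnion_le
  have hmain : 2 * #G.edgeFinset + (Fintype.card V - 1) ≤ 2 * arrangementCost G α := by
    rw [arrangementCost_eq_sum_card_crossedCuts]
    refine (Nat.add_le_add_left hlong _).trans (two_mul_card_add_sum_filter_le _ _ fun e he => ?_)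
    exact card_pos.mpr
      (crossedCuts_nonempty hf (G.not_isDiag_of_mem_edgeSet (G.mem_edgeFinset.mp he)))
  have hn : 1 ≤ Fintype.card V := Fintype.card_pos_iff.mpr hconn.nonempty
  have := (Nat.cast_le (α := ℚ)).mpr hmain
  push_cast [Nat.cast_sub hn] at this
  linarith
end

section
/- Every graph G with m edges has a bisection of size at least ⌈m/2⌉: there exists a partition of V into parts U and V∖U with ||U| − |V∖U|| ≤ 1 such that the number of edges between the parts is at least ⌈m/2⌉. -/
section BisectAuxSection

open Classical

namespace BisectAux

variable {V : Type*} [Fintype V]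

def sideB {t : ℕ} (pt : V → Fin t) (bt : V → Bool) (f : Fin t → Bool) (v : V) : Bool :=
  (f (pt v)).xor (bt v)

noncomputable def UB {t : ℕ} (pt : V → Fin t) (bt : V → Bool) (f : Fin t → Bool) : Finset V :=
  Finset.univ.filter (fun v => sideB pt bt f v = true)

lemma mem_UB {t : ℕ} (pt : V → Fin t) (bt : V → Bool) (f : Fin t → Bool) (v : V) :
    v ∈ UB pt bt f ↔ sideB pt bt f v = true := by
  simp [UB]

lemma cut_iff {t : ℕ} (pt : V → Fin t) (bt : V → Bool) (f : Fin t → Bool) (a b : V) :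
    (∃ u v, s(a,b) = s(u,v) ∧ u ∈ UB pt bt f ∧ v ∉ UB pt bt f) ↔
      sideB pt bt f a ≠ sideB pt bt f b := by
  constructor
  · rintro ⟨u, v, huv, hu, hv⟩
    rw [Sym2.eq_iff] at huv
    rw [mem_UB] at hu hv
    rcases huv with ⟨rfl, rfl⟩ | ⟨rfl, rfl⟩
    · intro h; rw [h] at hu; exact hv hu
    · intro h; rw [← h] at hu; exact hv hu
  · intro h
    cases ha : sideB pt bt f a
    · refine ⟨b, a, by rw [Sym2.eq_swap], ?_, ?_⟩
      · rw [mem_UB]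
        cases hb : sideB pt bt f b
        · exact absurd (ha.trans hb.symm) h
        · rfl
      · rw [mem_UB, ha]; simp
    · exact ⟨a, b, rfl, (mem_UB _ _ _ _).mpr ha, fun hb => h (ha.trans (((mem_UB _ _ _ _).mp hb)).symm)⟩

lemma count_ge {t : ℕ} (pt : V → Fin t) (bt : V → Bool) (a b : V)
    (h : pt a = pt b → bt a ≠ bt b) :
    2 ^ (t - 1) ≤
      (Finset.univ.filter (fun f : Fin t → Bool => sideB pt bt f a ≠ sideB pt bt f b)).card := by
  have ht : 1 ≤ t := by have := (pt a).isLt; omega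
  by_cases hp : pt a = pt b
  · -- same pair: bt differs, always cut
    have hbt := h hp
    have hall : (Finset.univ.filter
        (fun f : Fin t → Bool => sideB pt bt f a ≠ sideB pt bt f b)) = Finset.univ := by
      apply Finset.filter_true_of_mem
      intro f _
      simp only [sideB, hp]
      revert hbt
      cases f (pt b) <;> cases bt a <;> cases bt b <;> decide
    rw [hall, Finset.card_univ, Fintype.card_fun]
    simp only [Fintype.card_bool, Fintype.card_fin]
    exact Nat.pow_le_pow_right (by norm_num) (by omega)
  · -- different pairs: exactly half
    set p : (Fin t → Bool) → Prop :=
      fun f => sideB pt bt f a ≠ sideB pt bt f b with hpdef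
    have hflip : ∀ f : Fin t → Bool,
        sideB pt bt (Function.update f (pt a) (!(f (pt a)))) a
          = !(sideB pt bt f a) ∧
        sideB pt bt (Function.update f (pt a) (!(f (pt a)))) b
          = sideB pt bt f b := by
      intro f
      constructor
      · simp only [sideB, Function.update_self]
        cases f (pt a) <;> cases bt a <;> rfl
      · simp only [sideB, Function.update_of_ne (fun hh => hp hh.symm)]
    have hiff : ∀ f : Fin t → Bool,
        p (Function.update f (pt a) (!(f (pt a)))) ↔ ¬ p f := by
      intro f
      obtain ⟨h1, h2⟩ := hflip f
      simp only [hpdef, h1, h2]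
      cases sideB pt bt f a <;> cases sideB pt bt f b <;> simp
    have hinv : ∀ f : Fin t → Bool,
        Function.update (Function.update f (pt a) (!(f (pt a)))) (pt a)
          (!((Function.update f (pt a) (!(f (pt a)))) (pt a))) = f := by
      intro f
      simp [Function.update_self, Function.update_idem]
    have hcards : (Finset.univ.filter p).card
        = (Finset.univ.filter (fun f => ¬ p f)).card := by
      apply Finset.card_bij' (fun f _ => Function.update f (pt a) (!(f (pt a))))
        (fun f _ => Function.update f (pt a) (!(f (pt a))))
      · intro f _; exact hinv f
      · intro f _; exact hinv f
      · intro f hf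
        simp only [Finset.mem_filter, Finset.mem_univ, true_and] at hf ⊢
        exact fun hc => ((hiff f).mp hc) hf
      · intro f hf
        simp only [Finset.mem_filter, Finset.mem_univ, true_and] at hf ⊢
        exact (hiff f).mpr hf
    have htotal : (Finset.univ.filter p).card
        + (Finset.univ.filter (fun f => ¬ p f)).card = 2 ^ t := by
      rw [Finset.card_filter_add_card_filter_not, Finset.card_univ, Fintype.card_fun]
      simp
    have h2 : 2 ^ t = 2 * 2 ^ (t - 1) := by
      conv_lhs => rw [show t = (t-1)+1 by omega]
      rw [pow_succ']
    rw [hcards] at htotal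
    rw [h2] at htotal
    show 2 ^ (t - 1) ≤ (Finset.filter p Finset.univ).card
    omega

lemma range_even (g : ℕ → Bool) (k : ℕ) :
    ((Finset.range (2*k)).filter
      (fun i => g (i/2) ≠ decide (i % 2 = 1))).card = k := by
  induction k with
  | zero => simp
  | succ k ih =>
    have h1 : 2*(k+1) = (2*k+1)+1 := by ring
    rw [h1, Finset.range_add_one, Finset.range_add_one, Finset.filter_insert, Finset.filter_insert]
    have hd1 : (2*k+1)/2 = k := by omega
    have hm1 : (2*k+1) % 2 = 1 := by omega
    have hd0 : (2*k)/2 = k := by omega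
    have hm0 : (2*k) % 2 = 0 := by omega
    have hn0 : (2*k : ℕ) ∉ Finset.range (2*k) := by simp
    have hn1 : (2*k+1 : ℕ) ∉ Finset.range (2*k) := by simp
    cases hg : g k <;>
      simp [hd1, hm1, hd0, hm0, hg, Finset.card_insert_of_notMem,
        fun s hs => Finset.card_insert_of_notMem,
        Finset.mem_filter, hn0, hn1, ih]

lemma range_odd (g : ℕ → Bool) (k : ℕ) :
    ((Finset.range (2*k+1)).filter
      (fun i => g (i/2) ≠ decide (i % 2 = 1))).card = k + (g k).toNat := by
  rw [Finset.range_add_one, Finset.filter_insert]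
  have hd0 : (2*k)/2 = k := by omega
  have hm0 : (2*k) % 2 = 0 := by omega
  have hn0 : (2*k : ℕ) ∉ Finset.range (2*k) := by simp
  cases hg : g k <;>
    simp [hd0, hm0, hg, Finset.card_insert_of_notMem, Finset.mem_filter, hn0, range_even]

end BisectAux

end BisectAuxSection

open BisectAux

open Classical in
/-- Every graph with `m` edges has a bisection of size at least `⌈m/2⌉`: a partition
`(U, V∖U)` with `||U| − |V∖U|| ≤ 1` such that at least `⌈m/2⌉` edges go between the parts. -/
theorem exists_bisection_ge_half_edges {V : Type*} [Fintype V] (G : SimpleGraph V) :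
    ∃ U : Finset V, |(U.card : ℤ) - ((Finset.univ \ U).card : ℤ)| ≤ 1 ∧
      (G.edgeFinset.card + 1) / 2 ≤ cutSize G U := by
  classical
  set n := Fintype.card V with hn
  set t := (n+1)/2 with ht
  let σ : V ≃ Fin n := Fintype.equivFin V
  have hlt : ∀ v : V, (σ v : ℕ)/2 < t := fun v => by have := (σ v).isLt; omega
  set pt : V → Fin t := fun v => ⟨(σ v : ℕ)/2, hlt v⟩ with hptdef
  set bt : V → Bool := fun v => decide ((σ v : ℕ) % 2 = 1) with hbtdef
  -- balance of every UB
  have hbal : ∀ f : Fin t → Bool,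
      |((UB pt bt f).card : ℤ) - ((Finset.univ \ UB pt bt f).card : ℤ)| ≤ 1 := by
    intro f
    set g : ℕ → Bool := fun j => if h : j < t then f ⟨j, h⟩ else false with hgdef
    have hside : ∀ v : V, (sideB pt bt f v = true) ↔
        (g ((σ v : ℕ)/2) ≠ decide ((σ v : ℕ) % 2 = 1)) := by
      intro v
      have hgv : g ((σ v : ℕ)/2) = f (pt v) := by
        rw [hgdef]; exact dif_pos (hlt v)
      rw [hgv]
      show ((f (pt v)).xor (bt v) = true) ↔ (f (pt v) ≠ bt v)
      cases f (pt v) <;> cases hb : bt v <;> simp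
    have hcard : (UB pt bt f).card =
        ((Finset.range n).filter (fun i => g (i/2) ≠ decide (i % 2 = 1))).card := by
      apply Finset.card_bij (fun v _ => (σ v : ℕ))
      · intro v hv
        rw [mem_UB] at hv
        simp only [Finset.mem_filter, Finset.mem_range]
        exact ⟨(σ v).isLt, (hside v).mp hv⟩
      · intro u _ v _ h
        exact σ.injective (Fin.val_injective h)
      · intro i hi
        simp only [Finset.mem_filter, Finset.mem_range] at hi
        refine ⟨σ.symm ⟨i, hi.1⟩, ?_, ?_⟩
        · rw [mem_UB, hside]
          simpa using hi.2
        · simp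
    have hUle : (UB pt bt f).card ≤ n := by
      rw [hn]; exact Finset.card_le_univ _
    have hcompl : ((Finset.univ \ UB pt bt f).card : ℤ)
        = (n : ℤ) - ((UB pt bt f).card : ℤ) := by
      rw [Finset.card_sdiff_of_subset (Finset.subset_univ _), Finset.card_univ, ← hn,
        Nat.cast_sub hUle]
    have h2c : n ≤ 2 * (UB pt bt f).card + 1 ∧ 2 * (UB pt bt f).card ≤ n + 1 := by
      rcases Nat.even_or_odd n with ⟨k, hk⟩ | ⟨k, hk⟩
      · have hk' : n = 2 * k := by omega
        rw [hcard, hk', range_even]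
        omega
      · have hk' : n = 2 * k + 1 := by omega
        rw [hcard, hk', range_odd]
        cases g k <;> simp <;> omega
    rw [hcompl, abs_le]
    constructor <;> omega
  by_cases hm : G.edgeFinset.card = 0
  · exact ⟨UB pt bt (fun _ => false), hbal _, by rw [hm]; exact Nat.zero_le _⟩
  · have hmpos : 0 < G.edgeFinset.card := Nat.pos_of_ne_zero hm
    obtain ⟨e0, he0⟩ := Finset.card_pos.mp hmpos
    have hnpos : 0 < n := by
      rw [hn]; exact Fintype.card_pos_iff.mpr ⟨e0.out.1⟩
    have htpos : 1 ≤ t := by omega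
    have hcut : ∀ f : Fin t → Bool, cutSize G (UB pt bt f)
        = ∑ e ∈ G.edgeFinset,
            if (∃ u v, e = s(u, v) ∧ u ∈ UB pt bt f ∧ v ∉ UB pt bt f) then 1 else 0 := by
      intro f
      rw [cutSize, Finset.card_filter]
    have hedge : ∀ e ∈ G.edgeFinset, 2 ^ (t-1) ≤
        (Finset.univ.filter (fun f : Fin t → Bool =>
          ∃ u v, e = s(u, v) ∧ u ∈ UB pt bt f ∧ v ∉ UB pt bt f)).card := by
      intro e
      induction e using Sym2.ind with
      | _ a b =>
        intro he
        rw [SimpleGraph.mem_edgeFinset, SimpleGraph.mem_edgeSet] at he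
        have hab : a ≠ b := he.ne
        have hfc : (Finset.univ.filter (fun f : Fin t → Bool =>
              ∃ u v, s(a, b) = s(u, v) ∧ u ∈ UB pt bt f ∧ v ∉ UB pt bt f))
            = (Finset.univ.filter (fun f : Fin t → Bool =>
              sideB pt bt f a ≠ sideB pt bt f b)) := by
          apply Finset.filter_congr
          intro f _
          exact cut_iff pt bt f a b
        rw [hfc]
        apply count_ge
        intro hpe
        have hσ : (σ a : ℕ) ≠ (σ b : ℕ) := by
          intro hh
          exact hab (σ.injective (Fin.val_injective hh))
        have hdiv : (σ a : ℕ) / 2 = (σ b : ℕ) / 2 := congrArg Fin.val hpe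
        have hmod : (σ a : ℕ) % 2 ≠ (σ b : ℕ) % 2 := by omega
        show decide ((σ a : ℕ) % 2 = 1) ≠ decide ((σ b : ℕ) % 2 = 1)
        rcases Nat.mod_two_eq_zero_or_one (σ a : ℕ) with h1 | h1 <;>
          rcases Nat.mod_two_eq_zero_or_one (σ b : ℕ) with h2 | h2 <;>
            simp [h1, h2] at hmod ⊢
    have hmain : G.edgeFinset.card * 2 ^ (t-1)
        ≤ ∑ f : Fin t → Bool, cutSize G (UB pt bt f) := by
      calc G.edgeFinset.card * 2 ^ (t-1)
          = ∑ _e ∈ G.edgeFinset, 2 ^ (t-1) := by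
            rw [Finset.sum_const, smul_eq_mul]
        _ ≤ ∑ e ∈ G.edgeFinset, (Finset.univ.filter (fun f : Fin t → Bool =>
              ∃ u v, e = s(u, v) ∧ u ∈ UB pt bt f ∧ v ∉ UB pt bt f)).card :=
            Finset.sum_le_sum hedge
        _ = ∑ e ∈ G.edgeFinset, ∑ f : Fin t → Bool,
              (if (∃ u v, e = s(u, v) ∧ u ∈ UB pt bt f ∧ v ∉ UB pt bt f) then 1 else 0) := by
            refine Finset.sum_congr rfl fun e _ => ?_
            rw [Finset.card_filter]
        _ = ∑ f : Fin t → Bool, ∑ e ∈ G.edgeFinset,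
              (if (∃ u v, e = s(u, v) ∧ u ∈ UB pt bt f ∧ v ∉ UB pt bt f) then 1 else 0) :=
            Finset.sum_comm
        _ = ∑ f : Fin t → Bool, cutSize G (UB pt bt f) :=
            Finset.sum_congr rfl fun f _ => (hcut f).symm
    by_contra hcon
    push_neg at hcon
    have hub : ∀ f : Fin t → Bool, cutSize G (UB pt bt f) ≤ (G.edgeFinset.card - 1) / 2 := by
      intro f
      have := hcon (UB pt bt f) (hbal f)
      omega
    have hsum_ub : ∑ f : Fin t → Bool, cutSize G (UB pt bt f)
        ≤ 2 ^ t * ((G.edgeFinset.card - 1) / 2) := by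
      calc ∑ f : Fin t → Bool, cutSize G (UB pt bt f)
          ≤ ∑ _f : Fin t → Bool, ((G.edgeFinset.card - 1) / 2) :=
            Finset.sum_le_sum fun f _ => hub f
        _ = 2 ^ t * ((G.edgeFinset.card - 1) / 2) := by
            rw [Finset.sum_const, smul_eq_mul, Finset.card_univ, Fintype.card_fun]
            simp
    have h2t : 2 ^ t = 2 * 2 ^ (t - 1) := by
      conv_lhs => rw [show t = (t-1)+1 by omega]
      rw [pow_succ']
    have hkey : G.edgeFinset.card * 2 ^ (t-1) ≤ 2 ^ (t-1) * (G.edgeFinset.card - 1) := by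
      calc G.edgeFinset.card * 2 ^ (t-1) ≤ 2 ^ t * ((G.edgeFinset.card - 1) / 2) :=
            hmain.trans hsum_ub
        _ = 2 ^ (t-1) * (2 * ((G.edgeFinset.card - 1) / 2)) := by rw [h2t]; ring
        _ ≤ 2 ^ (t-1) * (G.edgeFinset.card - 1) := by
            exact Nat.mul_le_mul_left _ (by omega)
    rw [mul_comm] at hkey
    have := Nat.le_of_mul_le_mul_left hkey (pow_pos (by norm_num) (t-1))
    omega
end
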